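/- In the setting of the general CLT for quadratic forms, the entries a_{st} = b_s'𝒮b_t of the matrix 𝒜 = B'𝒮B satisfy max_{1≤s≤n} Σ_{t=1}^{n} a_{st}² = O_p(J/n); that is, the maximal row sum of squared entries of 𝒜 is of order J/n in probability. -/

import Mathlib

open MeasureTheory ProbabilityTheory Filter Matrix
open scoped ENNReal NNReal BigOperators Topology Classical

noncomputable section

namespace WaldVC

variable {Ω : Type*} [MeasurableSpace Ω]

/-- `X n = O_p(a n)` : boundedness in probability at rate `a`. -/
def IsBigOp (μ : Measure Ω) (X : ℕ → Ω → ℝ) (a : ℕ → ℝ) : Prop :=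
  ∀ ε : ℝ, 0 < ε → ∃ M : ℝ, 0 < M ∧
    ∀ᶠ n in Filter.atTop, (μ {ω | M * |a n| < |X n ω|}).toReal ≤ ε

/-- `X n = o_p(a n)` : convergence to zero in probability at rate `a`. -/
def IsLittleOp (μ : Measure Ω) (X : ℕ → Ω → ℝ) (a : ℕ → ℝ) : Prop :=
  ∀ ε : ℝ, 0 < ε →
    Filter.Tendsto (fun n => (μ {ω | ε * |a n| < |X n ω|}).toReal)
      Filter.atTop (nhds 0)

/-- Convergence in distribution of real random variables to the law `ν`. -/
def TendstoInDistrib (μ : Measure Ω) (X : ℕ → Ω → ℝ) (ν : Measure ℝ) : Prop :=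
  ∀ f : BoundedContinuousFunction ℝ ℝ,
    Filter.Tendsto (fun n => ∫ ω, f (X n ω) ∂μ) Filter.atTop (nhds (∫ x, f x ∂ν))

/-- Largest eigenvalue of a symmetric matrix, as the sup of Rayleigh quotients. -/
def maxEig {d : Type*} [Fintype d] (A : Matrix d d ℝ) : ℝ :=
  sSup {r | ∃ x : d → ℝ, x ⬝ᵥ x = 1 ∧ r = x ⬝ᵥ A.mulVec x}

/-- Smallest eigenvalue of a symmetric matrix, as the inf of Rayleigh quotients. -/
def minEig {d : Type*} [Fintype d] (A : Matrix d d ℝ) : ℝ :=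
  sInf {r | ∃ x : d → ℝ, x ⬝ᵥ x = 1 ∧ r = x ⬝ᵥ A.mulVec x}

/-- Spectral norm ‖A‖ = (largest eigenvalue of A'A)^{1/2}. -/
def specNorm {m d : Type*} [Fintype m] [Fintype d] (A : Matrix m d ℝ) : ℝ :=
  Real.sqrt (maxEig (Aᵀ * A))

/-- Property G for a sequence of (possibly random) square matrices:
largest eigenvalue is O_p(1), reciprocal of smallest eigenvalue is O_p(1). -/
def PropertyG (μ : Measure Ω) {d : ℕ → Type*} [∀ n, Fintype (d n)]
    (A : ∀ n, Ω → Matrix (d n) (d n) ℝ) : Prop :=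
  IsBigOp μ (fun n ω => maxEig (A n ω)) (fun _ => 1) ∧
  IsBigOp μ (fun n ω => (minEig (A n ω))⁻¹) (fun _ => 1)

/-- Absolute row and column sums of a matrix bounded by `C`. -/
def RowColSumBdd {m d : Type*} [Fintype m] [Fintype d] (C : ℝ)
    (A : Matrix m d ℝ) : Prop :=
  (∀ i, ∑ j, |A i j| ≤ C) ∧ (∀ j, ∑ i, |A i j| ≤ C)

/-- Euclidean norm of a vector. -/
def vecNorm {d : Type*} [Fintype d] (x : d → ℝ) : ℝ := Real.sqrt (x ⬝ᵥ x)

/-- For each `n`, `v n` is a vector of i.i.d. random variables with mean 0 and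
variance 1. -/
def IIDseq (μ : Measure Ω) (v : (n : ℕ) → Ω → Fin n → ℝ) : Prop :=
  (∀ n i, Measurable fun ω => v n ω i) ∧
  (∀ n, iIndepFun (fun i ω => v n ω i) μ) ∧
  (∀ n i j, IdentDistrib (fun ω => v n ω i) (fun ω => v n ω j) μ μ) ∧
  (∀ n i, ∫ ω, v n ω i ∂μ = 0) ∧
  (∀ n i, ∫ ω, (v n ω i) ^ 2 ∂μ = 1)

section TSLS

variable {N ι κ σ : Type*} [Fintype N] [Fintype ι] [Fintype κ] [Fintype σ]
  [DecidableEq ι] [DecidableEq κ] [DecidableEq σ]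

/-- Projection matrix `P_K = K(K'K)⁻¹K'`. -/
def projMat (K : Matrix N κ ℝ) : Matrix N N ℝ := K * (Kᵀ * K)⁻¹ * Kᵀ

/-- 2SLS estimator `(L'P_K L)⁻¹ L'P_K y`. -/
def tsls (L : Matrix N ι ℝ) (K : Matrix N κ ℝ) (y : N → ℝ) : ι → ℝ :=
  (Lᵀ * projMat K * L)⁻¹ *ᵥ ((Lᵀ * projMat K) *ᵥ y)

/-- `T = n⁻¹ L'P_K L`. -/
def Tmat (nn : ℝ) (L : Matrix N ι ℝ) (K : Matrix N κ ℝ) : Matrix ι ι ℝ :=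
  nn⁻¹ • (Lᵀ * projMat K * L)

/-- `D = R T⁻¹ R'`. -/
def Dmat (nn : ℝ) (L : Matrix N ι ℝ) (K : Matrix N κ ℝ) (R : Matrix σ ι ℝ) :
    Matrix σ σ ℝ :=
  R * (Tmat nn L K)⁻¹ * Rᵀ

/-- `𝒰 = T⁻¹ L'K (K'K)⁻¹ Ξ (K'K)⁻¹ K'L T⁻¹`. -/
def Umat (nn : ℝ) (L : Matrix N ι ℝ) (K : Matrix N κ ℝ) (Xi : Matrix κ κ ℝ) :
    Matrix ι ι ℝ :=
  (Tmat nn L K)⁻¹ * Lᵀ * K * (Kᵀ * K)⁻¹ * Xi * (Kᵀ * K)⁻¹ * Kᵀ * L * (Tmat nn L K)⁻¹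

/-- `𝒱 = (K'K)⁻¹ K'L T⁻¹ R' D⁻¹ R T⁻¹ L'K (K'K)⁻¹`. -/
def Vmat (nn : ℝ) (L : Matrix N ι ℝ) (K : Matrix N κ ℝ) (R : Matrix σ ι ℝ)
    (D : Matrix σ σ ℝ) : Matrix κ κ ℝ :=
  (Kᵀ * K)⁻¹ * Kᵀ * L * (Tmat nn L K)⁻¹ * Rᵀ * D⁻¹ * R * (Tmat nn L K)⁻¹ * Lᵀ * K *
    (Kᵀ * K)⁻¹

/-- `M = n⁻¹ K 𝒱 K'`. -/
def Mmat (nn : ℝ) (L : Matrix N ι ℝ) (K : Matrix N κ ℝ) (R : Matrix σ ι ℝ)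
    (D : Matrix σ σ ℝ) : Matrix N N ℝ :=
  nn⁻¹ • (K * Vmat nn L K R D * Kᵀ)

/-- The Wald-type statistic `(n θ'D⁻¹θ − d)/√(2d)`. -/
def wald (nn ds : ℝ) (th : σ → ℝ) (D : Matrix σ σ ℝ) : ℝ :=
  (nn * (th ⬝ᵥ (D⁻¹ *ᵥ th)) - ds) / Real.sqrt (2 * ds)

/-- The Kelejian–Prucha SHAC estimator of `Ξ = n⁻¹K'ΣK`. -/
def shacXi {M : ℕ} (nn : ℝ) (K : Matrix N κ ℝ) (u : N → ℝ) (Ker : ℝ → ℝ)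
    (dstar : N → N → Fin M → ℝ) (dband : Fin M → ℝ) : Matrix κ κ ℝ :=
  Matrix.of fun r s =>
    nn⁻¹ * ∑ i, ∑ j, K i r * K j s * u i * u j * Ker (⨅ m, dstar i j m / dband m)

end TSLS

/-- `ℓ_i`, the number of units within bandwidth distance of `i` in at least one
distance measure. -/
def ellCount {N : Type*} [Fintype N] [DecidableEq N] {M : ℕ}
    (dstar : N → N → Fin M → ℝ) (dband : Fin M → ℝ) (i : N) : ℕ :=
  (Finset.univ.filter fun j => ∃ m, dstar i j m ≤ dband m).card

/-- `ℓ = max_i ℓ_i`. -/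
def ellMax {N : Type*} [Fintype N] [DecidableEq N] {M : ℕ}
    (dstar : N → N → Fin M → ℝ) (dband : Fin M → ℝ) : ℕ :=
  Finset.univ.sup (ellCount dstar dband)

/-- The stacked index of the regression parameter `ξ = (λ', β', α')'`
(resp. `θ`, `γ`). -/
abbrev bidx (d1 d2 d3 : ℕ → ℕ) (n : ℕ) : Type :=
  (Fin (d1 n) ⊕ Fin (d2 n)) ⊕ Fin (d3 n)

/-- The selector matrix `R = [0, I]` extracting the last block. -/
def Ralpha (d1 d2 d3 : ℕ → ℕ) (n : ℕ) :
    Matrix (Fin (d3 n)) (bidx d1 d2 d3 n) ℝ :=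
  Matrix.of fun i j => if j = Sum.inr i then 1 else 0

/-- The selector matrix `R = [I, 0]` extracting the first block. -/
def Rmu (d1 d2 d3 : ℕ → ℕ) (n : ℕ) :
    Matrix (Fin (d1 n)) (bidx d1 d2 d3 n) ℝ :=
  Matrix.of fun i j => if j = Sum.inl (Sum.inl i) then 1 else 0

end WaldVC

namespace WaldVC

/-- Weighted Cauchy–Schwarz: `(∑ x y)² ≤ (∑ |y|) (∑ x² |y|)`. -/
lemma cs_aux {n : ℕ} (x y : Fin n → ℝ) :
    (∑ j, x j * y j) ^ 2 ≤ (∑ j, |y j|) * (∑ j, x j ^ 2 * |y j|) := by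
  have h0 : (∑ j, x j * y j) ^ 2 ≤ (∑ j, |x j| * |y j|) ^ 2 := by
    rw [← sq_abs (∑ j, x j * y j)]
    apply pow_le_pow_left₀ (abs_nonneg _) _ 2
    calc |∑ j, x j * y j| ≤ ∑ j, |x j * y j| := Finset.abs_sum_le_sum_abs _ _
      _ = ∑ j, |x j| * |y j| := by simp [abs_mul]
  refine h0.trans ?_
  have h2 := Finset.sum_mul_sq_le_sq_mul_sq Finset.univ
    (fun j => Real.sqrt |y j|) (fun j => |x j| * Real.sqrt |y j|)
  have e1 : ∀ j : Fin n, Real.sqrt |y j| * (|x j| * Real.sqrt |y j|) = |x j| * |y j| := by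
    intro j
    rw [show Real.sqrt |y j| * (|x j| * Real.sqrt |y j|)
        = |x j| * (Real.sqrt |y j| * Real.sqrt |y j|) by ring,
      Real.mul_self_sqrt (abs_nonneg _)]
  have e2 : ∀ j : Fin n, (Real.sqrt |y j|) ^ 2 = |y j| := fun j =>
    Real.sq_sqrt (abs_nonneg _)
  have e3 : ∀ j : Fin n, (|x j| * Real.sqrt |y j|) ^ 2 = x j ^ 2 * |y j| := by
    intro j; rw [mul_pow, sq_abs, e2]
  calc (∑ j, |x j| * |y j|) ^ 2
      = (∑ j, Real.sqrt |y j| * (|x j| * Real.sqrt |y j|)) ^ 2 := by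
        rw [Finset.sum_congr rfl fun j _ => (e1 j).symm]
    _ ≤ (∑ j, (Real.sqrt |y j|) ^ 2) * ∑ j, (|x j| * Real.sqrt |y j|) ^ 2 := h2
    _ = (∑ j, |y j|) * (∑ j, x j ^ 2 * |y j|) := by
        rw [Finset.sum_congr rfl fun j _ => e2 j, Finset.sum_congr rfl fun j _ => e3 j]

/-- in the setting of the general CLT for quadratic forms,
the entries `a_{st} = b_s'𝒮b_t` of `𝒜 = B'𝒮B` satisfy
`max_s Σ_t a_{st}² = O_p(J/n)`. -/
theorem max_row_sum_of_squares
    {Ω : Type*} [MeasurableSpace Ω] (μ : Measure Ω) [IsProbabilityMeasure μ]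
    (A S : (n : ℕ) → Ω → Matrix (Fin n) (Fin n) ℝ)
    (B : (n : ℕ) → Matrix (Fin n) (Fin n) ℝ)
    (J : ℕ → ℕ)
    (hmS : ∀ n, Measurable fun ω => (fun i j => S n ω i j))
    -- 𝒜 = B'𝒮B with 𝒮 symmetric
    (hAfac : ∀ n ω, A n ω = (B n)ᵀ * S n ω * B n)
    (hSsymm : ∀ n ω, (S n ω)ᵀ = S n ω)
    -- B uniformly bounded in absolute row and column sums
    (hB : ∃ CB : ℝ, ∀ n, RowColSumBdd CB (B n))
    -- entries of 𝒮 : s_ij = O_p(J/n) and Σ_i s_ij² = O_p(J/n) uniformly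
    (hSentry : ∀ ε : ℝ, 0 < ε → ∃ M : ℝ, 0 < M ∧ ∀ᶠ n in atTop,
      (μ {ω | ∃ i j, M * ((J n : ℝ) / n) < |S n ω i j|}).toReal ≤ ε)
    (hScol : ∀ ε : ℝ, 0 < ε → ∃ M : ℝ, 0 < M ∧ ∀ᶠ n in atTop,
      (μ {ω | ∃ j, M * ((J n : ℝ) / n) < ∑ i, (S n ω i j) ^ 2}).toReal ≤ ε) :
    ∀ ε : ℝ, 0 < ε → ∃ M : ℝ, 0 < M ∧ ∀ᶠ n in atTop,
      (μ {ω | ∃ sidx : Fin n,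
        M * ((J n : ℝ) / n) < ∑ t, (A n ω sidx t) ^ 2}).toReal ≤ ε := by
  intro ε hε
  obtain ⟨CB, hCB⟩ := hB
  set C : ℝ := max CB 1 with hCdef
  have hC1 : (1 : ℝ) ≤ C := le_max_right _ _
  have hC0 : (0 : ℝ) ≤ C := zero_le_one.trans hC1
  obtain ⟨M, hM, hEv⟩ := hScol ε hε
  refine ⟨C ^ 4 * M, by positivity, ?_⟩
  filter_upwards [hEv] with n hn
  refine le_trans (ENNReal.toReal_mono (measure_ne_top μ _) (measure_mono ?_)) hn
  intro ω hω
  simp only [Set.mem_setOf_eq] at hω ⊢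
  by_contra hcon
  push_neg at hcon
  obtain ⟨s, hs⟩ := hω
  set K : ℝ := M * ((J n : ℝ) / n) with hKdef
  have hK0 : (0 : ℝ) ≤ K := by positivity
  have hrowB : ∀ i, ∑ j, |B n i j| ≤ C := fun i => ((hCB n).1 i).trans (le_max_left _ _)
  have hcolB : ∀ j, ∑ i, |B n i j| ≤ C := fun j => ((hCB n).2 j).trans (le_max_left _ _)
  have hsym : ∀ i j, S n ω j i = S n ω i j := by
    intro i j
    have := congrFun (congrFun (hSsymm n ω) i) j
    simpa [Matrix.transpose_apply] using this
  have hSrow : ∀ i, ∑ j, (S n ω i j) ^ 2 ≤ K := by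
    intro i
    calc ∑ j, (S n ω i j) ^ 2 = ∑ j, (S n ω j i) ^ 2 :=
          Finset.sum_congr rfl fun j _ => by rw [hsym]
      _ ≤ K := hcon i
  set c : Fin n → ℝ := fun j => ∑ i, B n i s * S n ω i j with hcdef
  have hA : ∀ t, A n ω s t = ∑ j, c j * B n j t := by
    intro t
    rw [hAfac]
    simp [Matrix.mul_apply, hcdef, Matrix.transpose_apply]
  -- bound on ∑ c j ^ 2
  have hc : ∑ j, (c j) ^ 2 ≤ C ^ 2 * K := by
    have h1 : ∀ j, (c j) ^ 2 ≤ C * ∑ i, (S n ω i j) ^ 2 * |B n i s| := by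
      intro j
      have hcs := cs_aux (fun i => S n ω i j) (fun i => B n i s)
      have hrw : c j = ∑ i, S n ω i j * B n i s :=
        Finset.sum_congr rfl fun i _ => by ring
      rw [hrw]
      refine hcs.trans ?_
      exact mul_le_mul_of_nonneg_right (hcolB s)
        (Finset.sum_nonneg fun i _ => mul_nonneg (sq_nonneg _) (abs_nonneg _))
    calc ∑ j, (c j) ^ 2 ≤ ∑ j, C * ∑ i, (S n ω i j) ^ 2 * |B n i s| :=
          Finset.sum_le_sum fun j _ => h1 j
      _ = C * ∑ i, |B n i s| * ∑ j, (S n ω i j) ^ 2 := by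
          rw [← Finset.mul_sum, Finset.sum_comm]
          congr 1
          refine Finset.sum_congr rfl fun i _ => ?_
          rw [Finset.mul_sum]
          exact Finset.sum_congr rfl fun j _ => by ring
      _ ≤ C * ∑ i, |B n i s| * K := by
          refine mul_le_mul_of_nonneg_left (Finset.sum_le_sum fun i _ => ?_) hC0
          exact mul_le_mul_of_nonneg_left (hSrow i) (abs_nonneg _)
      _ = C * ((∑ i, |B n i s|) * K) := by rw [← Finset.sum_mul]
      _ ≤ C * (C * K) := mul_le_mul_of_nonneg_left
          (mul_le_mul_of_nonneg_right (hcolB s) hK0) hC0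
      _ = C ^ 2 * K := by ring
  -- bound on the row sum of squares of A
  have hmain : ∑ t, (A n ω s t) ^ 2 ≤ C ^ 4 * K := by
    have h2 : ∀ t, (A n ω s t) ^ 2 ≤ C * ∑ j, (c j) ^ 2 * |B n j t| := by
      intro t
      rw [hA t]
      refine (cs_aux c (fun j => B n j t)).trans ?_
      exact mul_le_mul_of_nonneg_right (hcolB t)
        (Finset.sum_nonneg fun j _ => mul_nonneg (sq_nonneg _) (abs_nonneg _))
    calc ∑ t, (A n ω s t) ^ 2 ≤ ∑ t, C * ∑ j, (c j) ^ 2 * |B n j t| :=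
          Finset.sum_le_sum fun t _ => h2 t
      _ = C * ∑ j, (c j) ^ 2 * ∑ t, |B n j t| := by
          rw [← Finset.mul_sum, Finset.sum_comm]
          congr 1
          exact Finset.sum_congr rfl fun j _ => (Finset.mul_sum _ _ _).symm
      _ ≤ C * ∑ j, (c j) ^ 2 * C := by
          refine mul_le_mul_of_nonneg_left (Finset.sum_le_sum fun j _ => ?_) hC0
          exact mul_le_mul_of_nonneg_left (hrowB j) (sq_nonneg _)
      _ = C ^ 2 * ∑ j, (c j) ^ 2 := by rw [← Finset.sum_mul]; ring
      _ ≤ C ^ 2 * (C ^ 2 * K) := mul_le_mul_of_nonneg_left hc (by positivity)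
      _ = C ^ 4 * K := by ring
  have hfin : C ^ 4 * M * ((J n : ℝ) / n) < C ^ 4 * (M * ((J n : ℝ) / n)) :=
    lt_of_lt_of_le hs hmain
  rw [← mul_assoc] at hfin
  exact lt_irrefl _ hfin

end WaldVC
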